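/- arXiv:1601.04045 — 12 statements merged into one kernel-verified Lean document; each statement's English description precedes it below -/
import Mathlib

section
/- Let n be an odd integer with n > 2 and let k be a positive integer with k > 2^n - 2. Then the Diophantine equation x^2 - k*x*y + y^2 = 2^n has no positive integer solution (x, y). -/
private lemma pow2_not_sq {n : ℕ} (hodd : Odd n) (y : ℤ) (hy : 0 < y)
    (h : y ^ 2 = 2 ^ n) : False := by
  have h1 : y.natAbs ^ 2 = 2 ^ n := by
    have := congrArg Int.natAbs h
    simpa [Int.natAbs_pow] using this
  have hdvd : y.natAbs ∣ 2 ^ n := h1 ▸ dvd_pow_self y.natAbs two_ne_zero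
  obtain ⟨m, hm, hym⟩ := (Nat.dvd_prime_pow Nat.prime_two).mp hdvd
  rw [hym, ← pow_mul] at h1
  have := Nat.pow_right_injective (le_refl 2) h1
  obtain ⟨t, ht⟩ := hodd
  omega

private lemma aux (n : ℕ) (hodd : Odd n) (k : ℤ) (hbig : 2 ^ n - 2 < k) :
    ∀ N : ℕ, ∀ x y : ℤ, 0 < x → 0 < y → y ≤ x → x + y ≤ (N : ℤ) →
      x ^ 2 - k * x * y + y ^ 2 = 2 ^ n → False := by
  intro N
  induction N using Nat.strong_induction_on with
  | _ N ih =>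
    intro x y hx hy hyx hN heq
    rcases lt_trichotomy (y ^ 2) (2 ^ n) with hlt | heqy | hgt
    · -- y² < 2ⁿ : then x(x - ky) = 2ⁿ - y² > 0, so x - ky ≥ 1, x ≥ k+1, contradiction
      have hfac : x * (x - k * y) = 2 ^ n - y ^ 2 := by ring_nf; linarith [heq]
      have hpos : 0 < x * (x - k * y) := by rw [hfac]; linarith
      have h2 : 0 < x - k * y := by
        by_contra h
        push_neg at h
        nlinarith
      have hx1 : 1 ≤ x - k * y := h2
      have hxk : k + 1 ≤ x := by nlinarith
      nlinarith
    · exact pow2_not_sq hodd y hy heqy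
    · -- y² > 2ⁿ : Vieta jump
      set x' := k * y - x with hx'
      have hfac : x * x' = y ^ 2 - 2 ^ n := by rw [hx']; ring_nf; linarith [heq]
      have hx'pos : 0 < x' := by
        rcases le_or_gt x' 0 with h | h
        · nlinarith
        · exact h
      have hx'lt : x' < y := by
        by_contra h
        push_neg at h
        have h2n : (0:ℤ) < 2 ^ n := by positivity
        nlinarith [mul_le_mul hyx h hy.le hx.le]
      have heq' : y ^ 2 - k * y * x' + x' ^ 2 = 2 ^ n := by
        rw [hx']; linear_combination heq
      have hNpos : 0 < N := by
        by_contra h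
        push_neg at h
        interval_cases N
        simp at hN
        omega
      refine ih (N - 1) (by omega) y x' hy hx'pos (le_of_lt hx'lt) ?_ heq'
      have : y + x' < x + y := by linarith
      have hcast : ((N - 1 : ℕ) : ℤ) = (N : ℤ) - 1 := by
        push_cast [Nat.cast_sub hNpos]; ring
      omega

theorem stmt_0 (n : ℕ) (hodd : Odd n) (hn : 2 < n) (k : ℤ) (hk : 0 < k)
    (hbig : 2 ^ n - 2 < k) :
    ¬ ∃ x y : ℤ, 0 < x ∧ 0 < y ∧ x ^ 2 - k * x * y + y ^ 2 = 2 ^ n := by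
  rintro ⟨x, y, hx, hy, heq⟩
  rcases le_total y x with h | h
  · exact aux n hodd k hbig (x + y).toNat x y hx hy h (by omega) heq
  · exact aux n hodd k hbig (x + y).toNat y x hy hx h (by omega)
      (by linear_combination heq)
end

section
/- Let n be an odd integer with n > 2 and let k be a positive integer with k ≤ 2^n - 2. If the Diophantine equation x^2 - k*x*y + y^2 = 2^n has a positive integer solution (x, y), then k is even. -/
lemma key_aux (k : ℤ) (hk : Odd k) : ∀ n : ℕ, Odd n → ∀ x y : ℤ,
    x ^ 2 - k * x * y + y ^ 2 ≠ 2 ^ n := by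
  intro n
  induction n using Nat.strong_induction_on with
  | _ n ih =>
    intro hn x y heq
    have hn1 : 1 ≤ n := hn.pos
    have hev : Even (x ^ 2 - k * x * y + y ^ 2) := by
      rw [heq]
      have : (2 : ℤ) ^ n = 2 * 2 ^ (n - 1) := by
        conv_lhs => rw [show n = 1 + (n - 1) by omega]
        rw [pow_add]; ring
      exact ⟨2 ^ (n - 1), by linarith⟩
    have hxy : Even x ∧ Even y := by
      rcases Int.even_or_odd x with hx | hx <;> rcases Int.even_or_odd y with hy | hy
      · exact ⟨hx, hy⟩
      · have hx2 : Even (x ^ 2) := by rw [sq]; exact hx.mul_left x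
        exact absurd hev (Int.not_even_iff_odd.mpr
          ((hx2.sub ((hx.mul_left k).mul_right y)).add_odd hy.pow))
      · have hy2 : Even (y ^ 2) := by rw [sq]; exact hy.mul_left y
        exact absurd hev (Int.not_even_iff_odd.mpr
          ((hx.pow.sub_even (hy.mul_left (k * x))).add_even hy2))
      · exact absurd hev (Int.not_even_iff_odd.mpr
          ((hx.pow.sub_odd ((hk.mul hx).mul hy)).add_odd hy.pow))
    obtain ⟨⟨a, ha⟩, ⟨b, hb⟩⟩ := hxy
    have heq4 : 4 * (a ^ 2 - k * a * b + b ^ 2) = 2 ^ n := by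
      rw [← heq, ha, hb]; ring
    rcases eq_or_lt_of_le hn1 with h1 | h3
    · rw [← h1] at heq4
      set m := a ^ 2 - k * a * b + b ^ 2
      omega
    · have h3' : 3 ≤ n := by
        rcases hn with ⟨t, ht⟩; omega
      have hsub : Odd (n - 2) := by
        rcases hn with ⟨t, ht⟩; exact ⟨t - 1, by omega⟩
      have hpow : (2 : ℤ) ^ n = 4 * 2 ^ (n - 2) := by
        conv_lhs => rw [show n = 2 + (n - 2) by omega]
        rw [pow_add]; ring
      have : a ^ 2 - k * a * b + b ^ 2 = 2 ^ (n - 2) := by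
        rw [hpow] at heq4; linarith
      exact ih (n - 2) (by omega) hsub a b this

theorem stmt_1 (n : ℕ) (hodd : Odd n) (hn : 2 < n) (k : ℤ) (hk : 0 < k)
    (hle : k ≤ 2 ^ n - 2)
    (hsol : ∃ x y : ℤ, 0 < x ∧ 0 < y ∧ x ^ 2 - k * x * y + y ^ 2 = 2 ^ n) :
    Even k := by
  by_contra hke
  obtain ⟨x, y, _, _, heq⟩ := hsol
  exact key_aux k (Int.not_even_iff_odd.mp hke) n hodd x y heq
end

section
/- Let n be an even integer with n ≥ 2 and let k be a positive integer with k > 2^n - 2. Then the Diophantine equation x^2 - k*x*y + y^2 = 2^n has no positive odd integer solution (x, y). -/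
lemma stmt_2_key (n : ℕ) (hn : 2 ≤ n) (k : ℤ) (hbig : 2 ^ n - 2 < k) :
    ∀ m : ℕ, ∀ x y : ℤ, (x + y).toNat = m → y ≤ x → 0 < y → Odd x → Odd y →
      x ^ 2 - k * x * y + y ^ 2 = 2 ^ n → False := by
  intro m
  induction m using Nat.strong_induction_on with
  | _ m ih =>
    intro x y hm hyx hy hox hoy heq
    have hx : 0 < x := lt_of_lt_of_le hy hyx
    have hd4 : (4 : ℤ) ≤ 2 ^ n := by
      calc (4 : ℤ) = 2 ^ 2 := by norm_num
        _ ≤ 2 ^ n := pow_le_pow_right₀ (by norm_num) hn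
    have hk1 : 2 ^ n - 1 ≤ k := by linarith [Int.lt_iff_add_one_le.mp hbig]
    have hkeven : Even k := by
      rcases Int.even_or_odd k with h | h
      · exact h
      · exfalso
        have h1 : Odd (x ^ 2 - k * x * y + y ^ 2) :=
          ((hox.pow).sub_odd ((h.mul hox).mul hoy)).add_odd (hoy.pow)
        rw [heq] at h1
        have h2 : Even ((2 : ℤ) ^ n) := by
          have : (2 : ℤ) ^ n = 2 * 2 ^ (n - 1) := by
            rw [← pow_succ']
            congr 1
            omega
          rw [this]
          exact even_two_mul _
        exact (Int.not_odd_iff_even.mpr h2) h1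
    have hxky : (k - 1) * y < x := by
      have hyy : y * y ≤ x * y := mul_le_mul_of_nonneg_right hyx hy.le
      have h1 : 2 ^ n ≤ x * (x - (k - 1) * y) := by nlinarith
      by_contra hcon
      push_neg at hcon
      have : x * (x - (k - 1) * y) ≤ 0 :=
        mul_nonpos_of_nonneg_of_nonpos hx.le (by linarith)
      linarith
    set x' : ℤ := k * y - x with hx'def
    have heq' : x' ^ 2 - k * x' * y + y ^ 2 = 2 ^ n := by
      have h : x' ^ 2 - k * x' * y + y ^ 2 = x ^ 2 - k * x * y + y ^ 2 := by
        rw [hx'def]; ring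
      rw [h, heq]
    have hmul : x * x' = y ^ 2 - 2 ^ n := by
      have h : x * x' = k * x * y - x ^ 2 := by rw [hx'def]; ring
      linarith
    have hox' : Odd x' := (hkeven.mul_right y).sub_odd hox
    rcases lt_trichotomy x' 0 with hneg | hzero | hpos
    · have hx'le : x' ≤ -1 := by omega
      have h2 : y ^ 2 - 2 ^ n ≤ -x := by
        calc y ^ 2 - 2 ^ n = x * x' := hmul.symm
          _ ≤ x * (-1) := mul_le_mul_of_nonneg_left hx'le hx.le
          _ = -x := by ring
      have hxk : (k - 1) * y + 1 ≤ x := Int.lt_iff_add_one_le.mp hxky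
      have hky : (2 ^ n - 2) * y ≤ (k - 1) * y :=
        mul_le_mul_of_nonneg_right (by linarith) hy.le
      have hprod : (y - 1) * (y + 2 ^ n - 1) ≤ 0 := by nlinarith
      have hy1 : y = 1 := by nlinarith
      subst hy1
      have hxk' : k ≤ x := by linarith
      have hxle : x ≤ 2 ^ n - 1 := by linarith
      have hxeq : x = k := by linarith
      subst hxeq
      nlinarith
    · rw [hzero] at hox'
      simp [Int.odd_iff] at hox'
    · have hlt : x' < y := by
        have h1 : x * x' < x * y := by
          have : y * y ≤ x * y := mul_le_mul_of_nonneg_right hyx hy.le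
          nlinarith
        exact lt_of_mul_lt_mul_left h1 hx.le
      have heq'' : y ^ 2 - k * y * x' + x' ^ 2 = 2 ^ n := by linarith [heq']
      refine ih (y + x').toNat ?_ y x' rfl hlt.le hpos hoy hox' heq''
      have h1 : y + x' < x + y := by linarith
      have h2 : 0 < y + x' := by linarith
      omega

theorem stmt_2 (n : ℕ) (heven : Even n) (hn : 2 ≤ n) (k : ℤ) (hk : 0 < k)
    (hbig : 2 ^ n - 2 < k) :
    ¬ ∃ x y : ℤ, 0 < x ∧ 0 < y ∧ Odd x ∧ Odd y ∧
      x ^ 2 - k * x * y + y ^ 2 = 2 ^ n := by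
  rintro ⟨x, y, hx, hy, hox, hoy, heq⟩
  rcases le_total y x with h | h
  · exact stmt_2_key n hn k hbig (x + y).toNat x y rfl h hy hox hoy heq
  · exact stmt_2_key n hn k hbig (y + x).toNat y x rfl h hx hoy hox (by linarith)
end

section
/- Let n be an odd integer with n > 2 and let k be a positive integer. If the Diophantine equation x^2 - k*x*y + y^2 = 2^n has a positive integer solution (x, y), then k is even and k ≤ 2^n - 2. -/
/-!
For odd `k` the form `x² - kxy + y²` is odd unless `x` and `y` are both even, and halving both
divides the value by `4`; so the form takes a value `2ⁿ` only for even `n`.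

For the bound, Vieta jumping: if `(x, y)` with `y ≤ x` solves `x² - kxy + y² = N`, so does
`(y, ky - x)`, and `x (ky - x) = y² - N`. When `N > 0` is not a square, `ky - x` is nonzero; if it
is positive it is smaller than `y` and we descend, and if it is negative, the equation at
`(y, ky - x)` gives `N ≥ 1 + k + 1`.
-/

theorem even_and_even_of_even_sq_sub_mul_add_sq {k x y : ℤ} (hk : Odd k)
    (h : Even (x ^ 2 - k * x * y + y ^ 2)) : Even x ∧ Even y := by
  rw [← Int.not_even_iff_odd] at hk
  simp only [Int.even_add, Int.even_sub, Int.even_mul, Int.even_pow, hk] at h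
  tauto

theorem even_of_sq_sub_mul_add_sq_eq_two_pow {k : ℤ} (hk : Odd k) (n : ℕ) :
    ∀ {x y : ℤ}, x ^ 2 - k * x * y + y ^ 2 = 2 ^ n → Even n := by
  induction n using Nat.twoStepInduction with
  | zero => exact fun _ => Even.zero
  | one =>
    intro x y h
    obtain ⟨⟨a, rfl⟩, ⟨b, rfl⟩⟩ :=
      even_and_even_of_even_sq_sub_mul_add_sq hk (by rw [h]; exact even_two)
    have h_quarter : 4 * (a ^ 2 - k * a * b + b ^ 2) = 2 := by linear_combination h
    exact absurd (Dvd.intro _ h_quarter) (by norm_num)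
  | more n ih _ =>
    intro x y h
    obtain ⟨⟨a, rfl⟩, ⟨b, rfl⟩⟩ := even_and_even_of_even_sq_sub_mul_add_sq hk
      (by rw [h]; exact Int.even_pow.2 ⟨even_two, by omega⟩)
    have h_quarter : 4 * (a ^ 2 - k * a * b + b ^ 2) = 4 * 2 ^ n := by linear_combination h
    exact (ih (mul_left_cancel₀ four_ne_zero h_quarter)).add even_two

theorem even_of_sq_eq_two_pow {z : ℤ} {n : ℕ} (h : z ^ 2 = 2 ^ n) : Even n :=
  even_of_sq_sub_mul_add_sq_eq_two_pow odd_one n (y := 0) (by simpa using h)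

theorem add_two_le_of_sq_sub_mul_add_sq_eq_of_le {N k x y : ℤ} (hN_pos : 0 < N)
    (hN : ∀ z : ℤ, z ^ 2 ≠ N) (hk : 0 ≤ k) (hy : 0 < y) (hyx : y ≤ x)
    (h : x ^ 2 - k * x * y + y ^ 2 = N) : k + 2 ≤ N := by
  have h_prod : x * (k * y - x) = y ^ 2 - N := by linear_combination -h
  have h_jump : y ^ 2 - k * y * (k * y - x) + (k * y - x) ^ 2 = N := by linear_combination h
  obtain h_neg | h_zero | h_pos := lt_trichotomy (k * y - x) 0
  · nlinarith [mul_nonneg hk (show 0 ≤ (x - k * y) * y - 1 by nlinarith)]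
  · exact absurd (by rw [h_zero, mul_zero] at h_prod; linarith) (hN y)
  · have h_lt : k * y - x < y := by nlinarith [mul_le_mul_of_nonneg_left hyx hy.le]
    exact add_two_le_of_sq_sub_mul_add_sq_eq_of_le hN_pos hN hk h_pos h_lt.le h_jump
termination_by (x + y).toNat
decreasing_by omega

theorem add_two_le_of_sq_sub_mul_add_sq_eq {N k x y : ℤ} (hN_pos : 0 < N)
    (hN : ∀ z : ℤ, z ^ 2 ≠ N) (hk : 0 ≤ k) (hx : 0 < x) (hy : 0 < y)
    (h : x ^ 2 - k * x * y + y ^ 2 = N) : k + 2 ≤ N := by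
  rcases le_total y x with hyx | hxy
  · exact add_two_le_of_sq_sub_mul_add_sq_eq_of_le hN_pos hN hk hy hyx h
  · exact add_two_le_of_sq_sub_mul_add_sq_eq_of_le hN_pos hN hk hx hxy (by linear_combination h)

theorem stmt_4_general (n : ℕ) (hodd : Odd n) (k : ℤ) (hk : 0 < k)
    (hsol : ∃ x y : ℤ, 0 < x ∧ 0 < y ∧ x ^ 2 - k * x * y + y ^ 2 = 2 ^ n) :
    Even k ∧ k ≤ 2 ^ n - 2 := by
  obtain ⟨x, y, hx, hy, h⟩ := hsol
  have h_not_even : ¬Even n := Nat.not_even_iff_odd.2 hodd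
  refine ⟨?_, ?_⟩
  · by_contra hk_odd
    exact h_not_even
      (even_of_sq_sub_mul_add_sq_eq_two_pow (Int.not_even_iff_odd.1 hk_odd) n h)
  · have h_not_sq : ∀ z : ℤ, z ^ 2 ≠ 2 ^ n := fun _ hz =>
      h_not_even (even_of_sq_eq_two_pow hz)
    linarith [add_two_le_of_sq_sub_mul_add_sq_eq (by positivity) h_not_sq hk.le hx hy h]

theorem stmt_4 (n : ℕ) (hodd : Odd n) (hn : 2 < n) (k : ℤ) (hk : 0 < k)
    (hsol : ∃ x y : ℤ, 0 < x ∧ 0 < y ∧ x ^ 2 - k * x * y + y ^ 2 = 2 ^ n) :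
    Even k ∧ k ≤ 2 ^ n - 2 :=
  stmt_4_general n hodd k hk hsol
end

section
/- Let n be an odd integer with n > 2 and let k be a positive integer with k > 2^n + 2. Then the Diophantine equation x^2 - k*x*y + y^2 = -2^n has no positive integer solution (x, y). -/
lemma key5 (n : ℕ) (k : ℤ) (hbig : 2 ^ n + 2 < k) :
    ∀ N : ℕ, ∀ x y : ℤ, (x + y).toNat ≤ N → 0 < x → 0 < y →
      x ^ 2 - k * x * y + y ^ 2 ≠ -2 ^ n := by
  have hP : (0:ℤ) < 2 ^ n := pow_pos (by norm_num) n
  intro N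
  induction N with
  | zero => intro x y hN hx hy _; omega
  | succ N ih =>
    suffices H : ∀ x y : ℤ, (x + y).toNat ≤ N + 1 → 0 < x → 0 < y → x ≤ y →
        x ^ 2 - k * x * y + y ^ 2 ≠ -2 ^ n by
      intro x y hN hx hy heq
      rcases le_total x y with h | h
      · exact H x y hN hx hy h heq
      · exact H y x (by omega) hy hx h (by linear_combination heq)
    intro x y hN hx hy hxy heq
    have hyy' : y * (k * x - y) = x ^ 2 + 2 ^ n := by linear_combination -heq
    have hy' : 0 < k * x - y := by nlinarith [hyy']
    have heq' : x ^ 2 - k * x * (k * x - y) + (k * x - y) ^ 2 = -2 ^ n := by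
      linear_combination heq
    rcases lt_or_ge (k * x - y) y with hlt | hle
    · exact ih x (k * x - y) (by omega) hx hy' heq'
    · -- y^2 ≤ x^2 + 2^n
      have h1 : y ^ 2 ≤ x ^ 2 + 2 ^ n := by nlinarith [hyy']
      have h2 : k * x ≤ x + y + 2 ^ n := by
        have h3 : (k * x) * y ≤ (x + y + 2 ^ n) * y := by
          nlinarith [heq, mul_nonneg (sub_nonneg.2 hxy) hx.le,
            mul_nonneg hP.le (by linarith : (0:ℤ) ≤ y - 1)]
        exact le_of_mul_le_mul_right h3 hy
      have hx1 : x = 1 ∨ 2 ≤ x := by omega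
      rcases hx1 with rfl | hx2
      · have hky : y * (k - y) = 2 ^ n + 1 := by linear_combination -heq
        have hkd : 0 < k - y := by nlinarith [hky]
        have h6 : y ≤ 2 ^ n + 1 := by nlinarith [hky]
        nlinarith [heq, mul_nonneg (by linarith : (0:ℤ) ≤ y - 1)
          (by linarith : (0:ℤ) ≤ 2 ^ n + 1 - y)]
      · have h4 : (2 ^ n + 2) * x < x + y + 2 ^ n := by
          calc (2 ^ n + 2) * x < k * x := by
                exact mul_lt_mul_of_pos_right hbig hx
            _ ≤ x + y + 2 ^ n := h2
        have h5 : x + 2 ^ n + 1 ≤ y := by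
          nlinarith [h4, mul_nonneg hP.le (by linarith : (0:ℤ) ≤ x - 2)]
        nlinarith [h1, h5, mul_pos hP hx]

theorem stmt_5 (n : ℕ) (hodd : Odd n) (hn : 2 < n) (k : ℤ) (hk : 0 < k)
    (hbig : 2 ^ n + 2 < k) :
    ¬ ∃ x y : ℤ, 0 < x ∧ 0 < y ∧ x ^ 2 - k * x * y + y ^ 2 = -2 ^ n := by
  rintro ⟨x, y, hx, hy, heq⟩
  exact key5 n k hbig (x + y).toNat x y le_rfl hx hy heq
end

section
/- Let n be an odd integer with n > 2 and let k be a positive integer with k ≤ 2^n + 2. If the Diophantine equation x^2 - k*x*y + y^2 = -2^n has a positive integer solution (x, y), then k is even. -/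
theorem stmt6_aux (k : ℤ) (hk : Odd k) : ∀ m : ℕ, Odd m → ∀ x y : ℤ,
    x ^ 2 - k * x * y + y ^ 2 = -2 ^ m → False := by
  intro m
  induction m using Nat.strong_induction_on with
  | _ m ih =>
    intro hm x y heq
    have hm1 : 1 ≤ m := hm.pos
    have hk2 : ((k : ZMod 2)) = 1 := by
      obtain ⟨j, hj⟩ := hk
      subst hj; push_cast; ring_nf
      simp [show ((2:ZMod 2)) = 0 from rfl]
    have h2m : ((2:ℤ) ^ m : ℤ) = 2 * 2 ^ (m - 1) := by
      rw [← pow_succ']; congr 1; omega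
    have hcast := congrArg (fun z : ℤ => (z : ZMod 2)) heq
    push_cast at hcast
    rw [hk2, show ((2:ZMod 2)) = 0 from rfl, zero_pow (by omega : m ≠ 0), neg_zero] at hcast
    have hxy : ((x : ZMod 2)) = 0 ∧ ((y : ZMod 2)) = 0 := by
      revert hcast
      generalize (x : ZMod 2) = a
      generalize (y : ZMod 2) = b
      revert a b; decide
    have hx : (2:ℤ) ∣ x := (ZMod.intCast_zmod_eq_zero_iff_dvd x 2).mp hxy.1
    have hy : (2:ℤ) ∣ y := (ZMod.intCast_zmod_eq_zero_iff_dvd y 2).mp hxy.2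
    obtain ⟨a, ha⟩ := hx
    obtain ⟨b, hb⟩ := hy
    subst ha hb
    rcases Nat.lt_or_ge m 3 with hm3 | hm3
    · -- m = 1
      have hm' : m = 1 := by obtain ⟨j, hj⟩ := hm; omega
      subst hm'
      have h4 : (4:ℤ) ∣ -2 := ⟨a ^ 2 - k * a * b + b ^ 2, by linear_combination -heq⟩
      norm_num at h4
    · have hmm : m - 2 < m := by omega
      have hmo : Odd (m - 2) := by
        obtain ⟨j, hj⟩ := hm; exact ⟨j - 1, by omega⟩
      refine ih (m - 2) hmm hmo a b ?_
      have h4 : (2:ℤ) ^ m = 2 ^ (m - 2) * 2 ^ 2 := by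
        rw [← pow_add]; congr 1; omega
      have h5 : 4 * (a ^ 2 - k * a * b + b ^ 2) = 4 * (-2 ^ (m - 2)) := by
        linear_combination heq - h4
      linarith

theorem stmt_6 (n : ℕ) (hodd : Odd n) (hn : 2 < n) (k : ℤ) (hk : 0 < k)
    (hle : k ≤ 2 ^ n + 2)
    (hsol : ∃ x y : ℤ, 0 < x ∧ 0 < y ∧ x ^ 2 - k * x * y + y ^ 2 = -2 ^ n) :
    Even k := by
  by_contra hodd_k
  obtain ⟨x, y, _, _, heq⟩ := hsol
  exact stmt6_aux k (Int.not_even_iff_odd.mp hodd_k) n hodd x y heq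
end

section
/- Let n be an odd integer with n > 2 and let k be a positive integer. If the Diophantine equation x^2 - k*x*y + y^2 = -2^n has a positive integer solution (x, y), then k is even and k ≤ 2^n + 2. -/
lemma no_odd_k : ∀ n : ℕ, n % 2 = 1 → ∀ k x y : ℤ, Odd k →
    x ^ 2 - k * x * y + y ^ 2 = -2 ^ n → False := by
  intro n
  induction n using Nat.strong_induction_on with
  | _ n ih =>
    intro hn k x y hk heq
    have key : ∀ a b : ZMod 2, a ^ 2 - a * b + b ^ 2 = 0 → a = 0 ∧ b = 0 := by decide
    have h2 : ((x : ZMod 2)) ^ 2 - (x : ZMod 2) * (y : ZMod 2) + (y : ZMod 2) ^ 2 = 0 := by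
      have hc := congrArg (fun t : ℤ => (t : ZMod 2)) heq
      obtain ⟨m, rfl⟩ := hk
      push_cast at hc
      have h2n : (2 : ZMod 2) ^ n = 0 := by
        rw [show (2 : ZMod 2) = 0 from rfl, zero_pow (by omega)]
      rw [h2n] at hc
      rw [show (2 : ZMod 2) = 0 from rfl] at hc
      linear_combination hc
    obtain ⟨hx0, hy0⟩ := key _ _ h2
    obtain ⟨a, rfl⟩ := (ZMod.intCast_zmod_eq_zero_iff_dvd x 2).mp hx0
    obtain ⟨b, rfl⟩ := (ZMod.intCast_zmod_eq_zero_iff_dvd y 2).mp hy0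
    push_cast at heq
    rcases Nat.lt_or_ge n 3 with h3 | h3
    · -- n = 1
      have hn1 : n = 1 := by omega
      subst hn1
      have : (4 : ℤ) ∣ -2 ^ 1 := ⟨a ^ 2 - k * a * b + b ^ 2, by linear_combination -heq⟩
      norm_num at this
    · have hpow : (2 : ℤ) ^ n = 4 * 2 ^ (n - 2) := by
        have h' : n - 2 + 2 = n := by omega
        calc (2 : ℤ) ^ n = 2 ^ (n - 2 + 2) := by rw [h']
        _ = 4 * 2 ^ (n - 2) := by rw [pow_succ, pow_succ]; ring
      have heq' : a ^ 2 - k * a * b + b ^ 2 = -2 ^ (n - 2) := by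
        have h4 : (4 : ℤ) * (a ^ 2 - k * a * b + b ^ 2) = 4 * (-2 ^ (n - 2)) := by
          linear_combination heq - hpow
        linarith
      exact ih (n - 2) (by omega) (by omega) k a b hk heq'

theorem stmt_7 (n : ℕ) (hodd : Odd n) (hn : 2 < n) (k : ℤ) (hk : 0 < k)
    (hsol : ∃ x y : ℤ, 0 < x ∧ 0 < y ∧ x ^ 2 - k * x * y + y ^ 2 = -2 ^ n) :
    Even k ∧ k ≤ 2 ^ n + 2 := by
  classical
  have hN : (8 : ℤ) ≤ 2 ^ n := by
    calc (8 : ℤ) = 2 ^ 3 := by norm_num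
    _ ≤ 2 ^ n := pow_le_pow_right₀ (by norm_num) (by omega)
  constructor
  · by_contra hke
    rw [Int.not_even_iff_odd] at hke
    obtain ⟨x, y, hx, hy, heq⟩ := hsol
    exact no_odd_k n (Nat.odd_iff.mp hodd) k x y hke heq
  · -- Vieta jumping
    have hP : ∃ s : ℕ, ∃ x y : ℤ, 0 < x ∧ 0 < y ∧ x ≤ y ∧
        x ^ 2 - k * x * y + y ^ 2 = -2 ^ n ∧ x + y = (s : ℤ) := by
      obtain ⟨x, y, hx, hy, heq⟩ := hsol
      rcases le_total x y with h | h
      · exact ⟨(x + y).toNat, x, y, hx, hy, h, heq,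
          by rw [Int.toNat_of_nonneg (by linarith)]⟩
      · exact ⟨(y + x).toNat, y, x, hy, hx, h, by linear_combination heq,
          by rw [Int.toNat_of_nonneg (by linarith)]⟩
    obtain ⟨x, y, hx, hy, hxy, heq, hsum⟩ := Nat.find_spec hP
    -- the Vieta jump
    have hmul : (k * x - y) * y = x ^ 2 + 2 ^ n := by linear_combination -heq
    have hy' : 0 < k * x - y := by
      by_contra h
      push_neg at h
      nlinarith
    have heq' : x ^ 2 - k * x * (k * x - y) + (k * x - y) ^ 2 = -2 ^ n := by
      linear_combination heq
    -- minimality gives y ≤ k*x - y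
    have hyy' : y ≤ k * x - y := by
      rcases le_total x (k * x - y) with hc | hc
      · have hfind := Nat.find_min' hP (m := (x + (k * x - y)).toNat)
          ⟨x, k * x - y, hx, hy', hc, heq',
            by rw [Int.toNat_of_nonneg (by linarith)]⟩
        have : (Nat.find hP : ℤ) ≤ ((x + (k * x - y)).toNat : ℤ) := by exact_mod_cast hfind
        rw [Int.toNat_of_nonneg (by linarith)] at this
        rw [← hsum] at this
        linarith
      · -- k*x - y ≤ x ≤ y, use pair (k*x-y, x)
        have heq'' : (k * x - y) ^ 2 - k * (k * x - y) * x + x ^ 2 = -2 ^ n := by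
          linear_combination heq'
        have hfind := Nat.find_min' hP (m := ((k * x - y) + x).toNat)
          ⟨k * x - y, x, hy', hx, hc, heq'',
            by rw [Int.toNat_of_nonneg (by linarith)]⟩
        have : (Nat.find hP : ℤ) ≤ (((k * x - y) + x).toNat : ℤ) := by exact_mod_cast hfind
        rw [Int.toNat_of_nonneg (by linarith)] at this
        rw [← hsum] at this
        linarith
    have hyb : y ^ 2 ≤ x ^ 2 + 2 ^ n := by nlinarith
    -- now bound k
    rcases (by omega : x = 1 ∨ 2 ≤ x) with hx1 | hx2
    · subst hx1
      have hyN : y ≤ 2 ^ n + 1 := by nlinarith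
      have hkey : 0 ≤ (y - 1) * (2 ^ n + 1 - y) := by
        apply mul_nonneg <;> linarith
      nlinarith
    · have h4 : (4 : ℤ) ≤ x ^ 2 := by nlinarith
      rcases le_or_gt k 2 with hk2 | hk2
      · linarith
      · have h1 : k * x ^ 2 ≤ 2 * x ^ 2 + 2 * 2 ^ n := by
          nlinarith [mul_nonneg (mul_nonneg hk.le hx.le) (sub_nonneg.mpr hxy)]
        have h2 : (k - 2) * 4 ≤ (k - 2) * x ^ 2 := by nlinarith
        linarith
end

section
/- Let n be a nonzero even integer with n ≥ 2 and let k be a positive integer with k > 2^n + 2. Then the Diophantine equation x^2 - k*x*y + y^2 = -2^n has no positive odd integer solution (x, y). -/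
private lemma vieta_key (n : ℕ) (hn : 2 ≤ n) (k : ℤ)
    (hbig : 2 ^ n + 2 < k) :
    ∀ s : ℕ, ∀ x y : ℤ, (x + y).toNat = s → 0 < x → 0 < y → Odd x → Odd y →
      x ≤ y → x ^ 2 - k * x * y + y ^ 2 ≠ -2 ^ n := by
  intro s
  induction s using Nat.strong_induction_on with
  | _ s ih =>
    intro x y hs hx hy hox hoy hxy heq
    have h2n : (0:ℤ) < 2 ^ n := by positivity
    have h2e : Even ((2:ℤ) ^ n) := by
      have : n ≠ 0 := by omega
      exact (Int.even_pow.mpr ⟨even_two, this⟩)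
    -- parity of k
    have hkxy : Even (k * (x * y)) := by
      have h : k * (x * y) = x ^ 2 + y ^ 2 + 2 ^ n := by linear_combination -heq
      rw [h]
      exact (hox.pow.add_odd hoy.pow).add h2e
    have hkeven : Even k := by
      rcases Int.even_mul.mp hkxy with h | h
      · exact h
      · exact absurd h (by simp [Int.even_mul, Int.not_even_iff_odd, hox, hoy])
    set y' : ℤ := k * x - y with hy'
    have hyy' : y * y' = x ^ 2 + 2 ^ n := by rw [hy']; linear_combination -heq
    have hy'pos : 0 < y' := by
      by_contra h
      push_neg at h
      nlinarith
    have hoy' : Odd y' := by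
      have hekx : Even (k * x) := hkeven.mul_right x
      exact hekx.sub_odd hoy
    rcases lt_or_ge y' y with hlt | hge
    · -- descent: (x, y') is a smaller solution
      have heq' : x ^ 2 - k * x * y' + y' ^ 2 = -2 ^ n := by
        rw [hy']; linear_combination heq
      have hlt' : (x + y').toNat < s := by
        rw [← hs]
        have : x + y' < x + y := by linarith
        omega
      rcases le_total x y' with h | h
      · exact ih _ hlt' x y' rfl hx hy'pos hox hoy' h heq'
      · exact ih _ hlt' y' x (by rw [add_comm]) hy'pos hx hoy' hox h
          (by linear_combination heq')
    · -- y' ≥ y : derive contradiction with k > 2^n + 2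
      have hkx : k * x = y + y' := by rw [hy']; ring
      rcases eq_or_lt_of_le (by linarith : (1:ℤ) ≤ x) with h1 | h2
      · -- x = 1
        have hx1 : x = 1 := h1.symm
        rw [hx1] at hyy' hkx
        have hnn : (0:ℤ) ≤ (y - 1) * (y' - 1) :=
          mul_nonneg (by linarith) (by linarith)
        nlinarith
      · -- 2 ≤ x
        have hx2 : (2:ℤ) ≤ x := by linarith
        have hkxx : k * x ^ 2 = x * y + x * y' := by linear_combination x * hkx
        have hA : x * y' ≤ y * y' := mul_le_mul_of_nonneg_right hxy hy'pos.le
        have hB : x * y ≤ x * y' := mul_le_mul_of_nonneg_left hge hx.le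
        have hC : (2 ^ n + 2) * x ^ 2 < k * x ^ 2 :=
          mul_lt_mul_of_pos_right hbig (by positivity)
        have hD : (4:ℤ) * 2 ^ n ≤ x ^ 2 * 2 ^ n :=
          mul_le_mul_of_nonneg_right (by nlinarith) h2n.le
        nlinarith

theorem stmt_8 (n : ℕ) (heven : Even n) (hn : 2 ≤ n) (k : ℤ) (hk : 0 < k)
    (hbig : 2 ^ n + 2 < k) :
    ¬ ∃ x y : ℤ, 0 < x ∧ 0 < y ∧ Odd x ∧ Odd y ∧
      x ^ 2 - k * x * y + y ^ 2 = -2 ^ n := by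
  rintro ⟨x, y, hx, hy, hox, hoy, heq⟩
  rcases le_total x y with h | h
  · exact vieta_key n hn k hbig (x + y).toNat x y rfl hx hy hox hoy h heq
  · exact vieta_key n hn k hbig (y + x).toNat y x rfl hy hx hoy hox h
      (by linear_combination heq)
end

section
/- Let n be an odd integer with n > 2, let k be a positive integer, and let p be an odd prime such that 2 is a quadratic nonresidue modulo p (i.e. the Legendre symbol (2/p) = -1). If the Diophantine equation x^2 - k*x*y + y^2 = 2^n has a positive integer solution (x, y), then k is even and k/2 is not congruent to 1 or -1 modulo p. -/
/-- Descent lemma: with odd `k`, the equation has no solution for odd exponents. -/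
lemma aux_no_odd_k (k : ℤ) (hk : ¬ Even k) :
    ∀ m : ℕ, Odd m → ∀ x y : ℤ, x ^ 2 - k * x * y + y ^ 2 = 2 ^ m → False := by
  intro m
  induction m using Nat.strong_induction_on with
  | _ m ih =>
    intro hm x y heq
    have hm1 : 1 ≤ m := hm.pos
    -- reduce mod 2
    have hk2 : (k : ZMod 2) = 1 := by
      have h1 : k % 2 = 1 := Int.odd_iff.mp (Int.not_even_iff_odd.mp hk)
      have h2 : k ≡ 1 [ZMOD 2] := by unfold Int.ModEq; omega
      exact_mod_cast (ZMod.intCast_eq_intCast_iff k 1 2).mpr h2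
    have hcast : (x : ZMod 2) ^ 2 - (k : ZMod 2) * x * y + (y : ZMod 2) ^ 2 = 0 := by
      have := congrArg (fun z : ℤ => (z : ZMod 2)) heq
      push_cast at this
      rw [this, show (2 : ZMod 2) = 0 by decide, zero_pow (by omega)]
    rw [hk2] at hcast
    have key : ∀ a b : ZMod 2, a ^ 2 - 1 * a * b + b ^ 2 = 0 → a = 0 ∧ b = 0 := by decide
    obtain ⟨hx0, hy0⟩ := key _ _ hcast
    have hxd : (2 : ℤ) ∣ x := by
      exact_mod_cast (ZMod.intCast_zmod_eq_zero_iff_dvd x 2).mp hx0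
    have hyd : (2 : ℤ) ∣ y := by
      exact_mod_cast (ZMod.intCast_zmod_eq_zero_iff_dvd y 2).mp hy0
    obtain ⟨a, rfl⟩ := hxd
    obtain ⟨b, rfl⟩ := hyd
    have h4 : 4 * (a ^ 2 - k * a * b + b ^ 2) = 2 ^ m := by ring_nf; ring_nf at heq; linarith
    rcases eq_or_lt_of_le hm1 with h1 | h3
    · exfalso
      rw [← h1] at h4
      omega
    · obtain ⟨j, rfl⟩ : ∃ j, m = j + 2 := ⟨m - 2, by omega⟩
      have hodd' : Odd j := by
        rcases hm with ⟨t, ht⟩; exact ⟨t - 1, by omega⟩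
      have hpow : (2 : ℤ) ^ (j + 2) = 4 * 2 ^ j := by rw [pow_add]; ring
      rw [hpow] at h4
      have : a ^ 2 - k * a * b + b ^ 2 = 2 ^ j := by linarith
      exact ih j (by omega) hodd' a b this

lemma aux_sq_ne (p : ℕ) [Fact p.Prime] (hp2 : p ≠ 2) (hsq : ¬ IsSquare (2 : ZMod p))
    (t : ℕ) (z : ZMod p) : z ^ 2 ≠ 2 ^ (2 * t + 1) := by
  intro h
  apply hsq
  have h2 : (2 : ZMod p) ≠ 0 := by
    intro h0
    have : ((2 : ℕ) : ZMod p) = 0 := by exact_mod_cast h0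
    have := (ZMod.natCast_eq_zero_iff 2 p).mp this
    have := (Nat.prime_dvd_prime_iff_eq (Fact.out) Nat.prime_two).mp this
    exact hp2 this
  have ht : (2 : ZMod p) ^ t ≠ 0 := pow_ne_zero _ h2
  refine ⟨z * ((2 : ZMod p) ^ t)⁻¹, ?_⟩
  field_simp
  linear_combination -h


theorem stmt_10 (n : ℕ) (hodd : Odd n) (hn : 2 < n) (k : ℤ) (hk : 0 < k)
    (p : ℕ) [Fact p.Prime] (hp2 : p ≠ 2) (hleg : legendreSym p 2 = -1)
    (hsol : ∃ x y : ℤ, 0 < x ∧ 0 < y ∧ x ^ 2 - k * x * y + y ^ 2 = 2 ^ n) :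
    Even k ∧ ¬ k / 2 ≡ 1 [ZMOD p] ∧ ¬ k / 2 ≡ -1 [ZMOD p] := by
  obtain ⟨x, y, hx, hy, heq⟩ := hsol
  have hkeven : Even k := by
    by_contra h
    exact aux_no_odd_k k h n hodd x y heq
  obtain ⟨c, hc⟩ := id hkeven
  have hk2 : k / 2 = c := by omega
  have hsq : ¬ IsSquare (2 : ZMod p) := by
    have h := (legendreSym.eq_neg_one_iff p (a := 2)).mp hleg
    simpa using h
  obtain ⟨t, ht⟩ := hodd
  subst ht
  have hzcast : (x : ZMod p) ^ 2 - (k : ZMod p) * (x : ZMod p) * (y : ZMod p)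
      + (y : ZMod p) ^ 2 = 2 ^ (2 * t + 1) := by
    have h := congrArg (fun z : ℤ => (z : ZMod p)) heq
    push_cast at h
    exact h
  refine ⟨hkeven, ?_, ?_⟩
  · intro hmod
    rw [hk2] at hmod
    have h1 : ((c : ℤ) : ZMod p) = ((1 : ℤ) : ZMod p) :=
      (ZMod.intCast_eq_intCast_iff _ _ _).mpr hmod
    have hkc : (k : ZMod p) = 2 := by
      rw [hc]; push_cast at h1 ⊢; rw [h1]; ring
    exact aux_sq_ne p hp2 hsq t ((x : ZMod p) - (y : ZMod p))
      (by linear_combination hzcast + (x : ZMod p) * (y : ZMod p) * hkc)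
  · intro hmod
    rw [hk2] at hmod
    have h1 : ((c : ℤ) : ZMod p) = ((-1 : ℤ) : ZMod p) :=
      (ZMod.intCast_eq_intCast_iff _ _ _).mpr hmod
    have hkc : (k : ZMod p) = -2 := by
      rw [hc]; push_cast at h1 ⊢; rw [h1]; ring
    exact aux_sq_ne p hp2 hsq t ((x : ZMod p) + (y : ZMod p))
      (by linear_combination hzcast + (x : ZMod p) * (y : ZMod p) * hkc)
end

section
/- Let n be an odd integer with n > 2 and let k be a positive integer. If the Diophantine equation x^2 - k*x*y + y^2 = 2^n has a positive integer solution (x, y), then k is a multiple of 3. -/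
theorem stmt_11 (n : ℕ) (hodd : Odd n) (hn : 2 < n) (k : ℤ) (hk : 0 < k)
    (hsol : ∃ x y : ℤ, 0 < x ∧ 0 < y ∧ x ^ 2 - k * x * y + y ^ 2 = 2 ^ n) :
    3 ∣ k := by
  obtain ⟨x, y, -, -, h⟩ := hsol
  obtain ⟨m, hm⟩ := hodd
  have h3 : (x : ZMod 3) ^ 2 - (k : ZMod 3) * x * y + y ^ 2 = 2 := by
    have := congrArg (Int.cast : ℤ → ZMod 3) h
    push_cast at this
    have h4 : (2:ZMod 3) ^ 2 = 1 := by decide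
    rw [this, hm, pow_add, pow_mul, h4, one_pow, one_mul, pow_one]
  have hk0 : (k : ZMod 3) = 0 := by
    have key : ∀ a b c : ZMod 3, b ^ 2 - a * b * c + c ^ 2 = 2 → a = 0 := by decide
    exact key _ _ _ h3
  exact (ZMod.intCast_zmod_eq_zero_iff_dvd k 3).mp hk0
end

section
/- Let d be a positive integer that is not a perfect square, let (x1, y1) be the fundamental solution (the least positive integer solution) of the Pell equation x^2 - d*y^2 = 1, and let N be a positive integer. If the equation u^2 - d*v^2 = N has an integer solution, then there exist integers u, v with u^2 - d*v^2 = N, 0 ≤ v, 2*(x1 + 1)*v^2 ≤ y1^2 * N, u ≠ 0, and 2*u^2 ≤ (x1 + 1)*N. -/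
theorem stmt_13 (d : ℤ) (hd : 0 < d) (hnsq : ¬ IsSquare d)
    (x1 y1 : ℤ) (hx1 : 0 < x1) (hy1 : 0 < y1)
    (hpell : x1 ^ 2 - d * y1 ^ 2 = 1)
    (hfund : ∀ a b : ℤ, 0 < a → 0 < b → a ^ 2 - d * b ^ 2 = 1 → x1 ≤ a ∧ y1 ≤ b)
    (N : ℤ) (hN : 0 < N)
    (hsol : ∃ u v : ℤ, u ^ 2 - d * v ^ 2 = N) :
    ∃ u v : ℤ, u ^ 2 - d * v ^ 2 = N ∧ 0 ≤ v ∧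
      2 * (x1 + 1) * v ^ 2 ≤ y1 ^ 2 * N ∧ u ≠ 0 ∧ 2 * u ^ 2 ≤ (x1 + 1) * N := by
  classical
  obtain ⟨u0, v0, huv0⟩ := hsol
  have hne : ∃ k : ℕ, ∃ u v : ℤ, u ^ 2 - d * v ^ 2 = N ∧ v.natAbs = k :=
    ⟨v0.natAbs, u0, v0, huv0, rfl⟩
  obtain ⟨u, v, huv, hvk⟩ := Nat.find_spec hne
  have hmin : ∀ u' v' : ℤ, u' ^ 2 - d * v' ^ 2 = N → Nat.find hne ≤ v'.natAbs := by
    intro u' v' h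
    exact Nat.find_min' hne ⟨u', v', h, rfl⟩
  set U := |u| with hU
  set V := |v| with hV
  have habs : U ^ 2 - d * V ^ 2 = N := by rw [hU, hV, sq_abs, sq_abs]; exact huv
  have hVnn : 0 ≤ V := abs_nonneg v
  have hU2 : U ^ 2 = N + d * V ^ 2 := by linarith
  have hUpos : 0 < U := by
    rcases lt_or_eq_of_le (abs_nonneg u) with h | h
    · exact h
    · exfalso
      have : U ^ 2 = 0 := by rw [hU, ← h]; ring
      nlinarith [sq_nonneg V]
  have hx2 : 2 ≤ x1 := by nlinarith [sq_nonneg (y1 - 1), sq_nonneg (x1 - 1)]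
  have hdy : d * y1 ^ 2 = x1 ^ 2 - 1 := by linarith
  by_cases hbd : 2 * (x1 + 1) * V ^ 2 ≤ y1 ^ 2 * N
  · refine ⟨U, V, habs, hVnn, hbd, ne_of_gt hUpos, ?_⟩
    have key : (x1 + 1) * (2 * U ^ 2) ≤ (x1 + 1) * ((x1 + 1) * N) := by
      nlinarith [mul_le_mul_of_nonneg_left hbd hd.le]
    exact le_of_mul_le_mul_left key (by linarith)
  · exfalso
    push_neg at hbd
    have hVpos : 0 < V := by
      rcases lt_or_eq_of_le hVnn with h | h
      · exact h
      · exfalso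
        rw [← h] at hbd
        nlinarith [sq_nonneg y1]
    set v' := x1 * V - y1 * U with hv'
    set u' := x1 * U - d * y1 * V with hu'
    have heq : u' ^ 2 - d * v' ^ 2 = N := by
      have : u' ^ 2 - d * v' ^ 2 = (x1 ^ 2 - d * y1 ^ 2) * (U ^ 2 - d * V ^ 2) := by
        rw [hu', hv']; ring
      rw [this, hpell, habs, one_mul]
    -- show |v'| < V
    have hA2 : (y1 * U) ^ 2 = y1 ^ 2 * N + (x1 ^ 2 - 1) * V ^ 2 := by
      linear_combination y1 ^ 2 * hU2 + V ^ 2 * hdy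
    have h1 : (x1 - 1) * V < y1 * U := by
      have e : (y1 * U) ^ 2 - ((x1 - 1) * V) ^ 2 = y1 ^ 2 * N + (2 * x1 - 2) * V ^ 2 := by
        linear_combination hA2
      have hs : ((x1 - 1) * V) ^ 2 < (y1 * U) ^ 2 := by
        nlinarith [mul_pos (pow_pos hy1 2) hN, mul_nonneg (by linarith : (0:ℤ) ≤ 2 * x1 - 2) (sq_nonneg V)]
      exact lt_of_pow_lt_pow_left₀ 2 (mul_nonneg hy1.le hUpos.le) hs
    have h2 : y1 * U < (x1 + 1) * V := by
      have e : ((x1 + 1) * V) ^ 2 - (y1 * U) ^ 2 = (2 * x1 + 2) * V ^ 2 - y1 ^ 2 * N := by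
        linear_combination -1 * hA2
      have hs : (y1 * U) ^ 2 < ((x1 + 1) * V) ^ 2 := by linarith
      exact lt_of_pow_lt_pow_left₀ 2 (by positivity) hs
    have hlt : v' ^ 2 < V ^ 2 := by
      have := sq_lt_sq' (by linarith : -V < v') (by linarith : v' < V)
      simpa using this
    have hnat : v'.natAbs < V.natAbs := by
      have h3 : -V < v' := by linarith
      have h4 : v' < V := by linarith
      have h5 : |v'| < |V| := by
        rw [abs_of_nonneg hVnn]
        exact abs_lt.mpr ⟨h3, h4⟩
      rw [Int.abs_eq_natAbs, Int.abs_eq_natAbs] at h5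
      exact_mod_cast h5
    have hVk : V.natAbs = Nat.find hne := by rw [hV, Int.natAbs_abs, hvk]
    have := hmin u' v' heq
    omega
end

section
/- Let d be a positive integer that is not a perfect square, let (x1, y1) be the fundamental solution (the least positive integer solution) of the Pell equation x^2 - d*y^2 = 1, and let N be a positive integer. If the equation u^2 - d*v^2 = -N has an integer solution, then there exist integers u, v with u^2 - d*v^2 = -N, 0 < v, 2*(x1 - 1)*v^2 ≤ y1^2 * N, and 2*u^2 ≤ (x1 - 1)*N. -/
theorem stmt_14 (d : ℤ) (hd : 0 < d) (hnsq : ¬ IsSquare d)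
    (x1 y1 : ℤ) (hx1 : 0 < x1) (hy1 : 0 < y1)
    (hpell : x1 ^ 2 - d * y1 ^ 2 = 1)
    (hfund : ∀ a b : ℤ, 0 < a → 0 < b → a ^ 2 - d * b ^ 2 = 1 → x1 ≤ a ∧ y1 ≤ b)
    (N : ℤ) (hN : 0 < N)
    (hsol : ∃ u v : ℤ, u ^ 2 - d * v ^ 2 = -N) :
    ∃ u v : ℤ, u ^ 2 - d * v ^ 2 = -N ∧ 0 < v ∧
      2 * (x1 - 1) * v ^ 2 ≤ y1 ^ 2 * N ∧ 2 * u ^ 2 ≤ (x1 - 1) * N := by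
  classical
  -- d ≥ 2, hence x1 ≥ 2
  have hd2 : 2 ≤ d := by
    rcases lt_or_ge d 2 with h | h
    · interval_cases d
      · exact absurd ⟨1, by ring⟩ hnsq
    · exact h
  have hx2 : 2 ≤ x1 := by nlinarith [sq_nonneg y1, sq_nonneg (x1 - 1)]
  obtain ⟨u₀, v₀, h₀⟩ := hsol
  have hv₀ : v₀ ≠ 0 := by
    rintro rfl
    nlinarith [sq_nonneg u₀]
  -- there is a solution with positive v (as a natural number)
  have hP : ∃ n : ℕ, 0 < n ∧ ∃ u : ℤ, u ^ 2 - d * (n : ℤ) ^ 2 = -N := by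
    refine ⟨v₀.natAbs, Int.natAbs_pos.mpr hv₀, u₀, ?_⟩
    rw [Int.natCast_natAbs, sq_abs]
    exact h₀
  -- pick the minimal such n, made opaque
  obtain ⟨n, ⟨hnpos, u', hu'⟩, hminN⟩ :
      ∃ n : ℕ, (0 < n ∧ ∃ u : ℤ, u ^ 2 - d * (n : ℤ) ^ 2 = -N) ∧
        ∀ m : ℕ, (0 < m ∧ ∃ u : ℤ, u ^ 2 - d * (m : ℤ) ^ 2 = -N) → n ≤ m :=
    ⟨Nat.find hP, Nat.find_spec hP, fun m hm => Nat.find_min' hP hm⟩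
  set v : ℤ := (n : ℤ) with hvdef
  have hv : 0 < v := Int.natCast_pos.mpr hnpos
  set u : ℤ := |u'| with hudef
  have hu0 : 0 ≤ u := abs_nonneg _
  have hu : u ^ 2 - d * v ^ 2 = -N := by rw [hudef, sq_abs]; exact hu'
  -- minimality of v
  have hmin : ∀ a b : ℤ, a ^ 2 - d * b ^ 2 = -N → 0 < b → v ≤ b := by
    intro a b hab hb
    have hb' : (0:ℕ) < b.natAbs := Int.natAbs_pos.mpr hb.ne'
    have : n ≤ b.natAbs := by
      apply hminN
      refine ⟨hb', a, ?_⟩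
      rw [Int.natCast_natAbs, sq_abs]
      exact hab
    calc v = (n : ℤ) := rfl
      _ ≤ (b.natAbs : ℤ) := by exact_mod_cast this
      _ = |b| := Int.natCast_natAbs b
      _ = b := abs_of_pos hb
  -- the composed solution
  have key : (x1 * u - d * y1 * v) ^ 2 - d * (x1 * v - y1 * u) ^ 2 = -N := by
    linear_combination (u ^ 2 - d * v ^ 2) * hpell + hu
  have hv'ne : x1 * v - y1 * u ≠ 0 := by
    intro h
    rw [h] at key
    nlinarith [sq_nonneg (x1 * u - d * y1 * v)]
  have h2 : y1 ^ 2 * u ^ 2 = (x1 ^ 2 - 1) * v ^ 2 - y1 ^ 2 * N := by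
    linear_combination y1 ^ 2 * hu - v ^ 2 * hpell
  have h1 : (x1 - 1) * v ≥ y1 * u := by
    rcases lt_or_gt_of_ne hv'ne with hneg | hpos
    · -- x1*v - y1*u < 0 : contradiction
      exfalso
      have hsol' : (x1 * u - d * y1 * v) ^ 2 - d * (-(x1 * v - y1 * u)) ^ 2 = -N := by
        linear_combination key
      have := hmin _ _ hsol' (by linarith)
      have hge : y1 * u ≥ (x1 + 1) * v := by linarith
      have hp : (0:ℤ) < (x1 + 1) * v := mul_pos (by linarith) hv
      have hge2 : ((x1 + 1) * v) ^ 2 ≤ (y1 * u) ^ 2 := by nlinarith [hge, hp]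
      nlinarith [hge2, h2, mul_pos (show (0:ℤ) < x1 + 1 by linarith) (mul_pos hv hv),
        mul_pos (mul_pos hy1 hy1) hN]
    · have := hmin _ _ key hpos
      linarith
  have hy1u : 0 ≤ y1 * u := mul_nonneg hy1.le hu0
  have h3' := mul_self_le_mul_self hy1u h1
  have h3 : y1 ^ 2 * u ^ 2 ≤ (x1 - 1) ^ 2 * v ^ 2 := by
    have : (y1 * u) * (y1 * u) = y1 ^ 2 * u ^ 2 := by ring
    rw [this] at h3'
    have h4 : ((x1 - 1) * v) * ((x1 - 1) * v) = (x1 - 1) ^ 2 * v ^ 2 := by ring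
    rw [h4] at h3'
    exact h3'
  have bound1 : 2 * (x1 - 1) * v ^ 2 ≤ y1 ^ 2 * N := by linarith [h2, h3]
  have bound2 : 2 * u ^ 2 ≤ (x1 - 1) * N := by
    have hle : (x1 + 1) * (2 * (x1 - 1) * v ^ 2) ≤ (x1 + 1) * (y1 ^ 2 * N) :=
      mul_le_mul_of_nonneg_left bound1 (by linarith)
    have hy2 : (0:ℤ) < y1 ^ 2 := by positivity
    have hkey : y1 ^ 2 * (2 * u ^ 2 - (x1 - 1) * N) ≤ 0 := by linarith [hle, h2]
    by_contra hcon
    push_neg at hcon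
    have : 0 < y1 ^ 2 * (2 * u ^ 2 - (x1 - 1) * N) := mul_pos hy2 (by linarith)
    linarith
  exact ⟨u, v, hu, hv, bound1, bound2⟩
end
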